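/- arXiv:math-ph/0703072 — 3 statements merged into one kernel-verified Lean document; each statement's English description precedes it below -/
import Mathlib

section
/- If the n×n matrix functions A(x), S(x), and the n×m matrix function Π(x) satisfy the ODEs A_x = A², Π_x = -iAΠJH, S_x = ΠJHJ*Π* - (AS + SA*) with H(x) Hermitian and J Hermitian with J² = I, and the identity A(0)S(0) - S(0)A(0)* = iΠ(0)JΠ(0)* holds at x = 0, then the identity A(x)S(x) - S(x)A(x)* = iΠ(x)JΠ(x)* holds for all x. -/
open Matrix

/-! The defect `A S - S Aᴴ - i Π J Πᴴ` has derivative identically zero: differentiating, the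
`A S Aᴴ` terms cancel, and both `A S - S Aᴴ` and `i Π J Πᴴ` contribute
`A Π J H J Πᴴ - Π J H J Πᴴ Aᴴ`. Hence the defect is constant on `[0, l]`, and it vanishes at `0`. -/

section MatrixCalculus

variable {R : Type*} [NormedRing R] [NormedAlgebra ℝ R] {ι κ μ : Type*}

def HasMatrixDerivAt (f : ℝ → Matrix ι κ R) (f' : Matrix ι κ R) (x : ℝ) : Prop :=
  ∀ i j, HasDerivAt (fun t => f t i j) (f' i j) x

theorem hasMatrixDerivAt_const (c : Matrix ι κ R) (x : ℝ) :
    HasMatrixDerivAt (fun _ => c) 0 x :=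
  fun i j => hasDerivAt_const x (c i j)

namespace HasMatrixDerivAt

variable {x : ℝ}

theorem sub {f g : ℝ → Matrix ι κ R} {f' g' : Matrix ι κ R}
    (hf : HasMatrixDerivAt f f' x) (hg : HasMatrixDerivAt g g' x) :
    HasMatrixDerivAt (fun t => f t - g t) (f' - g') x :=
  fun i j => (hf i j).sub (hg i j)

theorem const_smul {f : ℝ → Matrix ι κ ℂ} {f' : Matrix ι κ ℂ}
    (hf : HasMatrixDerivAt f f' x) (c : ℂ) :
    HasMatrixDerivAt (fun t => c • f t) (c • f') x :=
  fun i j => (hf i j).const_mul c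

theorem mul [Fintype κ] {f : ℝ → Matrix ι κ R} {g : ℝ → Matrix κ μ R} {f' : Matrix ι κ R}
    {g' : Matrix κ μ R} (hf : HasMatrixDerivAt f f' x) (hg : HasMatrixDerivAt g g' x) :
    HasMatrixDerivAt (fun t => f t * g t) (f' * g x + f x * g') x := by
  intro i j
  simp only [Matrix.add_apply, mul_apply, ← Finset.sum_add_distrib]
  exact HasDerivAt.fun_sum fun c _ => (hf i c).fun_mul (hg c j)

theorem mul_const [Fintype κ] {f : ℝ → Matrix ι κ R} {f' : Matrix ι κ R}
    (hf : HasMatrixDerivAt f f' x) (c : Matrix κ μ R) :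
    HasMatrixDerivAt (fun t => f t * c) (f' * c) x := by
  simpa using hf.mul (hasMatrixDerivAt_const c x)

theorem conjTranspose [StarRing R] [StarModule ℝ R] [ContinuousStar R]
    {f : ℝ → Matrix ι κ R} {f' : Matrix ι κ R} (hf : HasMatrixDerivAt f f' x) :
    HasMatrixDerivAt (fun t => (f t)ᴴ) f'ᴴ x :=
  fun i j => (hf j i).star

theorem congr_deriv {f : ℝ → Matrix ι κ R} {f' g' : Matrix ι κ R}
    (hf : HasMatrixDerivAt f f' x) (h : f' = g') : HasMatrixDerivAt f g' x :=
  h ▸ hf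

end HasMatrixDerivAt

theorem eq_of_hasMatrixDerivAt_zero {f : ℝ → Matrix ι κ R} {a b : ℝ}
    (hf : ∀ x ∈ Set.Icc a b, HasMatrixDerivAt f 0 x) :
    ∀ x ∈ Set.Icc a b, f x = f a := by
  intro x hx
  ext i j
  exact constant_of_has_deriv_right_zero
    (fun y hy => (hf y hy i j).continuousAt.continuousWithinAt)
    (fun y hy => (hf y (Set.Ico_subset_Icc_self hy) i j).hasDerivWithinAt) x hx

end MatrixCalculus

theorem derivative_of_defect_eq_zero {ι κ : Type*} [Fintype ι] [Fintype κ]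
    {j h : Matrix κ κ ℂ} (hj : jᴴ = j) (hh : hᴴ = h)
    (a s : Matrix ι ι ℂ) (p : Matrix ι κ ℂ) :
    let s' := p * j * h * jᴴ * pᴴ - (a * s + s * aᴴ)
    let p' := (-Complex.I) • (a * p * j * h)
    (a * a * s + a * s') - (s' * aᴴ + s * (a * a)ᴴ) - Complex.I • (p' * j * pᴴ + p * j * p'ᴴ)
      = 0 := by
  intro s' p'
  have hI : Complex.I • p' = a * p * j * h := by
    simp only [p', smul_smul, mul_neg, Complex.I_mul_I, neg_neg, one_smul]
  have hI' : Complex.I • p'ᴴ = -(h * j * pᴴ * aᴴ) := by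
    simp only [p', conjTranspose_smul, conjTranspose_mul, hj, hh, star_neg, Complex.star_def,
      Complex.conj_I, neg_neg, smul_smul, Complex.I_mul_I, neg_one_smul, Matrix.mul_assoc]
  have hsplit : Complex.I • (p' * j * pᴴ + p * j * p'ᴴ)
      = Complex.I • p' * j * pᴴ + p * j * (Complex.I • p'ᴴ) := by
    simp only [smul_add, Matrix.smul_mul, Matrix.mul_smul]
  rw [hsplit, hI, hI']
  simp only [s', conjTranspose_mul, hj, Matrix.mul_sub, Matrix.sub_mul, Matrix.mul_add,
    Matrix.add_mul, Matrix.mul_neg, Matrix.mul_assoc]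
  abel

theorem matrix_identity_propagates_general {m n : ℕ} (l : ℝ)
    (J : Matrix (Fin m) (Fin m) ℂ) (hJ : Jᴴ = J)
    (H : ℝ → Matrix (Fin m) (Fin m) ℂ) (hH : ∀ x, (H x)ᴴ = H x)
    (A S : ℝ → Matrix (Fin n) (Fin n) ℂ) (P : ℝ → Matrix (Fin n) (Fin m) ℂ)
    (hA : ∀ x ∈ Set.Icc 0 l, ∀ i j, HasDerivAt (fun t => A t i j) ((A x * A x) i j) x)
    (hP : ∀ x ∈ Set.Icc 0 l, ∀ i j, HasDerivAt (fun t => P t i j)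
      (((-Complex.I) • (A x * P x * J * H x)) i j) x)
    (hS : ∀ x ∈ Set.Icc 0 l, ∀ i j, HasDerivAt (fun t => S t i j)
      ((P x * J * H x * Jᴴ * (P x)ᴴ - (A x * S x + S x * (A x)ᴴ)) i j) x)
    (h0 : A 0 * S 0 - S 0 * (A 0)ᴴ = Complex.I • (P 0 * J * (P 0)ᴴ)) :
    ∀ x ∈ Set.Icc 0 l, A x * S x - S x * (A x)ᴴ = Complex.I • (P x * J * (P x)ᴴ) := by
  set defect : ℝ → Matrix (Fin n) (Fin n) ℂ :=
    fun t => A t * S t - S t * (A t)ᴴ - Complex.I • (P t * J * (P t)ᴴ)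
  have hderiv : ∀ x ∈ Set.Icc 0 l, HasMatrixDerivAt defect 0 x := by
    intro x hx
    have hA : HasMatrixDerivAt A _ x := hA x hx
    have hS : HasMatrixDerivAt S _ x := hS x hx
    have hP : HasMatrixDerivAt P _ x := hP x hx
    refine (((hA.mul hS).sub (hS.mul hA.conjTranspose)).sub
      (((hP.mul_const J).mul hP.conjTranspose).const_smul Complex.I)).congr_deriv ?_
    exact derivative_of_defect_eq_zero hJ (hH x) (A x) (S x) (P x)
  intro x hx
  have hconst := eq_of_hasMatrixDerivAt_zero hderiv x hx
  rwa [show defect 0 = 0 from sub_eq_zero.mpr h0, sub_eq_zero] at hconst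

/-- If A_x = A², Π_x = -iAΠJH, S_x = ΠJHJ*Π* - (AS+SA*), H Hermitian, J Hermitian
with J² = I, and A(0)S(0) - S(0)A(0)* = iΠ(0)JΠ(0)*, then
A(x)S(x) - S(x)A(x)* = iΠ(x)JΠ(x)* for all x in the interval. -/
theorem matrix_identity_propagates {m n : ℕ} (l : ℝ) (hl : 0 ≤ l)
    (J : Matrix (Fin m) (Fin m) ℂ) (hJ : Jᴴ = J) (hJ2 : J * J = 1)
    (H : ℝ → Matrix (Fin m) (Fin m) ℂ) (hH : ∀ x, (H x)ᴴ = H x)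
    (A S : ℝ → Matrix (Fin n) (Fin n) ℂ) (P : ℝ → Matrix (Fin n) (Fin m) ℂ)
    (hA : ∀ x ∈ Set.Icc 0 l, ∀ i j, HasDerivAt (fun t => A t i j) ((A x * A x) i j) x)
    (hP : ∀ x ∈ Set.Icc 0 l, ∀ i j, HasDerivAt (fun t => P t i j)
      (((-Complex.I) • (A x * P x * J * H x)) i j) x)
    (hS : ∀ x ∈ Set.Icc 0 l, ∀ i j, HasDerivAt (fun t => S t i j)
      ((P x * J * H x * Jᴴ * (P x)ᴴ - (A x * S x + S x * (A x)ᴴ)) i j) x)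
    (hS0 : (S 0)ᴴ = S 0)
    (h0 : A 0 * S 0 - S 0 * (A 0)ᴴ = Complex.I • (P 0 * J * (P 0)ᴴ)) :
    ∀ x ∈ Set.Icc 0 l, A x * S x - S x * (A x)ᴴ = Complex.I • (P x * J * (P x)ᴴ) :=
  matrix_identity_propagates_general l J hJ H hH A S P hA hP hS h0
end

section
/- If the n×n matrices A, S (with S invertible) and the n×m matrix Π satisfy the identity AS - SA* = iΠJΠ*, where J = J* = J^{-1}, then the transfer matrix w_A(z) = I_m - iJΠ*S^{-1}(A - zI_n)^{-1}Π satisfies w_A(z̄)* J w_A(z) = J for all z not in the spectrum of A; in particular w_A(z) is invertible with w_A(z)^{-1} = J w_A(z̄)* J. -/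
open Matrix ComplexConjugate

/-- If AS - SA* = iΠJΠ* with S Hermitian invertible and J = J* = J⁻¹, then the
transfer matrix w_A(z) = I - iJΠ*S⁻¹(A - zI)⁻¹Π satisfies w_A(z̄)* J w_A(z) = J,
and w_A(z) is invertible with inverse J w_A(z̄)* J. -/
theorem transfer_matrix_J_property {m n : ℕ}
    (J : Matrix (Fin m) (Fin m) ℂ) (hJ : Jᴴ = J) (hJ2 : J * J = 1)
    (A S : Matrix (Fin n) (Fin n) ℂ) (hSH : Sᴴ = S) (hS : IsUnit S)
    (P : Matrix (Fin n) (Fin m) ℂ)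
    (hid : A * S - S * Aᴴ = Complex.I • (P * J * Pᴴ))
    (z : ℂ)
    (hz : IsUnit (A - z • (1 : Matrix (Fin n) (Fin n) ℂ)))
    (hz' : IsUnit (A - (conj z) • (1 : Matrix (Fin n) (Fin n) ℂ)))
    (wA : ℂ → Matrix (Fin m) (Fin m) ℂ)
    (hwA : ∀ u : ℂ, wA u =
      1 - Complex.I • (J * Pᴴ * S⁻¹ * (A - u • (1 : Matrix (Fin n) (Fin n) ℂ))⁻¹ * P)) :
    (wA (conj z))ᴴ * J * wA z = J ∧
    wA z * (J * (wA (conj z))ᴴ * J) = 1 ∧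
    (J * (wA (conj z))ᴴ * J) * wA z = 1 := by
  set B := A - z • (1 : Matrix (Fin n) (Fin n) ℂ) with hBdef
  set Bc := A - (conj z) • (1 : Matrix (Fin n) (Fin n) ℂ) with hBcdef
  have hSd : IsUnit S.det := (Matrix.isUnit_iff_isUnit_det S).mp hS
  have hBd : IsUnit B.det := (Matrix.isUnit_iff_isUnit_det B).mp hz
  have hBcd : IsUnit Bc.det := (Matrix.isUnit_iff_isUnit_det Bc).mp hz'
  have hCd : IsUnit (Bcᴴ).det := by
    rw [Matrix.det_conjTranspose]; exact isUnit_star.mpr hBcd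
  -- Bcᴴ = Aᴴ - z • 1
  have hC : Bcᴴ = Aᴴ - z • (1 : Matrix (Fin n) (Fin n) ℂ) := by
    simp [hBcdef, Matrix.conjTranspose_sub, Matrix.conjTranspose_smul]
  -- key identity
  have hBS : B * S - S * Bcᴴ = Complex.I • (P * J * Pᴴ) := by
    rw [hC, hBdef, ← hid]
    simp only [Matrix.sub_mul, Matrix.mul_sub, Matrix.smul_mul, Matrix.mul_smul,
      Matrix.one_mul, Matrix.mul_one, one_mul, mul_one]
    abel
  have hPJP : P * J * Pᴴ = (-Complex.I) • (B * S - S * Bcᴴ) := by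
    rw [hBS, smul_smul]
    simp
  -- the conjTranspose of wA (conj z)
  have e1 : (wA (conj z))ᴴ = 1 + Complex.I • (Pᴴ * (Bcᴴ)⁻¹ * S⁻¹ * P * J) := by
    rw [hwA (conj z)]
    rw [Matrix.conjTranspose_sub, Matrix.conjTranspose_smul]
    simp only [Matrix.conjTranspose_mul, Matrix.conjTranspose_nonsing_inv,
      Matrix.conjTranspose_one, hJ, hSH, Matrix.conjTranspose_conjTranspose]
    rw [← hBcdef, show star Complex.I = -Complex.I from by simp, neg_smul, sub_neg_eq_add]
    simp only [Matrix.mul_assoc]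
  have hJJ : ∀ (M : Matrix (Fin m) (Fin m) ℂ), J * (J * M) = M := fun M => by
    rw [← Matrix.mul_assoc, hJ2, Matrix.one_mul]
  -- quartic term
  have hq : P * (J * (Pᴴ * (S⁻¹ * (B⁻¹ * P)))) =
      (-Complex.I) • ((B * S - S * Bcᴴ) * (S⁻¹ * (B⁻¹ * P))) := by
    rw [← Matrix.mul_assoc, ← Matrix.mul_assoc, hPJP, Matrix.smul_mul]
  have hq2 : (B * S - S * Bcᴴ) * (S⁻¹ * (B⁻¹ * P)) =
      P - S * (Bcᴴ * (S⁻¹ * (B⁻¹ * P))) := by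
    rw [Matrix.sub_mul, Matrix.mul_assoc, Matrix.mul_assoc,
      Matrix.mul_nonsing_inv_cancel_left S _ hSd, Matrix.mul_nonsing_inv_cancel_left B P hBd]
  have hq3 : Pᴴ * (Bcᴴ⁻¹ * (S⁻¹ * (P * (J * (Pᴴ * (S⁻¹ * (B⁻¹ * P))))))) =
      (-Complex.I) • (Pᴴ * (Bcᴴ⁻¹ * (S⁻¹ * P)) - Pᴴ * (S⁻¹ * (B⁻¹ * P))) := by
    rw [hq, hq2, Matrix.mul_smul, Matrix.mul_smul, Matrix.mul_smul]
    congr 1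
    rw [Matrix.mul_sub, Matrix.mul_sub, Matrix.mul_sub,
      Matrix.nonsing_inv_mul_cancel_left S _ hSd,
      Matrix.nonsing_inv_mul_cancel_left Bcᴴ _ hCd]
  have key : (wA (conj z))ᴴ * J * wA z = J := by
    rw [e1, hwA z, ← hBdef]
    simp only [Matrix.add_mul, Matrix.mul_sub, Matrix.sub_mul, Matrix.smul_mul,
      Matrix.mul_smul, Matrix.one_mul, Matrix.mul_one, smul_smul, Matrix.mul_assoc,
      hJ2, hJJ]
    rw [hq3]
    rw [smul_smul, smul_sub]
    match_scalars <;> simp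
  have key' : (wA (conj z))ᴴ * (J * wA z) = J := by rw [← Matrix.mul_assoc]; exact key
  have left : (J * (wA (conj z))ᴴ * J) * wA z = 1 := by
    simp only [Matrix.mul_assoc]
    rw [key', hJ2]
  exact ⟨key, mul_eq_one_comm.mp left, left⟩
end

section
/- Let u(s) = c²(1 + iθ*S₀^{-1}(sI_n - α)^{-1}θ) with αS₀ - S₀α* = iθθ*, S₀ = S₀* invertible, c = (1-i)/√2. Then |u(s)| = 1 for all real s not in the spectrum of α. -/
open Matrix

/-- With αS₀ - S₀α* = iθθ*, S₀ Hermitian invertible, c = (1-i)/√2, the function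
u(s) = c²(1 + iθ*S₀⁻¹(sI - α)⁻¹θ) has |u(s)| = 1 for real s not in the
spectrum of α. -/
theorem modulus_one_realization {n : ℕ}
    (α S₀ : Matrix (Fin n) (Fin n) ℂ) (hS₀H : S₀ᴴ = S₀) (hS₀ : IsUnit S₀)
    (θ : Matrix (Fin n) (Fin 1) ℂ)
    (hid : α * S₀ - S₀ * αᴴ = Complex.I • (θ * θᴴ))
    (c : ℂ) (hc : c = (1 - Complex.I) / (Real.sqrt 2 : ℂ))
    (s : ℝ)
    (hs : IsUnit ((s : ℂ) • (1 : Matrix (Fin n) (Fin n) ℂ) - α)) :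
    ‖c ^ 2 * (1 + Complex.I *
      (θᴴ * S₀⁻¹ * ((s : ℂ) • (1 : Matrix (Fin n) (Fin n) ℂ) - α)⁻¹ * θ) 0 0)‖ = 1 := by
  set M : Matrix (Fin n) (Fin n) ℂ := (s : ℂ) • (1 : Matrix (Fin n) (Fin n) ℂ) - α with hM
  have hMH : Mᴴ = (s : ℂ) • (1 : Matrix (Fin n) (Fin n) ℂ) - αᴴ := by
    simp [hM, conjTranspose_smul, Complex.conj_ofReal]
  have hdet : IsUnit M.det := (Matrix.isUnit_iff_isUnit_det _).mp hs
  have hdet' : IsUnit (Mᴴ).det := by rw [Matrix.det_conjTranspose]; exact hdet.star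
  have hS₀det : IsUnit S₀.det := (Matrix.isUnit_iff_isUnit_det _).mp hS₀
  have h1 : M⁻¹ * M = 1 := Matrix.nonsing_inv_mul M hdet
  have h2 : Mᴴ * (Mᴴ)⁻¹ = 1 := Matrix.mul_nonsing_inv _ hdet'
  have hS1 : S₀⁻¹ * S₀ = 1 := Matrix.nonsing_inv_mul S₀ hS₀det
  have hS2 : S₀ * S₀⁻¹ = 1 := Matrix.mul_nonsing_inv S₀ hS₀det
  have cS1 : ∀ (X : Matrix (Fin n) (Fin 1) ℂ), S₀⁻¹ * (S₀ * X) = X := fun X => by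
    rw [← Matrix.mul_assoc, hS1, Matrix.one_mul]
  have cS2 : ∀ (X : Matrix (Fin n) (Fin 1) ℂ), S₀ * (S₀⁻¹ * X) = X := fun X => by
    rw [← Matrix.mul_assoc, hS2, Matrix.one_mul]
  -- θθᴴ identity
  have hθθ : θ * θᴴ = Complex.I • (M * S₀ - S₀ * Mᴴ) := by
    have hexp : M * S₀ - S₀ * Mᴴ = -(α * S₀ - S₀ * αᴴ) := by
      rw [hMH, hM]
      simp only [sub_mul, mul_sub, smul_mul_assoc, mul_smul_comm, one_mul, mul_one]
      abel
    rw [hexp, hid, smul_neg, smul_smul, Complex.I_mul_I, neg_smul, neg_neg, one_smul]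
  -- key sandwich identity
  have key : M⁻¹ * (θ * θᴴ) * (Mᴴ)⁻¹ = Complex.I • (S₀ * (Mᴴ)⁻¹ - M⁻¹ * S₀) := by
    rw [hθθ, Matrix.mul_smul, Matrix.smul_mul]
    congr 1
    rw [mul_sub, sub_mul]
    simp only [← mul_assoc]
    rw [h1, one_mul, mul_assoc (M⁻¹ * S₀), h2, mul_one]
  set A : Matrix (Fin 1) (Fin 1) ℂ := θᴴ * S₀⁻¹ * M⁻¹ * θ with hA
  set B : Matrix (Fin 1) (Fin 1) ℂ := θᴴ * (Mᴴ)⁻¹ * S₀⁻¹ * θ with hB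
  have hAB : A * B = Complex.I • (B - A) := by
    have expand : A * B = θᴴ * S₀⁻¹ * (M⁻¹ * (θ * θᴴ) * (Mᴴ)⁻¹) * (S₀⁻¹ * θ) := by
      rw [hA, hB]
      simp only [Matrix.mul_assoc]
    rw [expand, key, hA, hB]
    simp only [Matrix.mul_smul, Matrix.smul_mul, Matrix.mul_sub, Matrix.sub_mul,
      Matrix.mul_assoc, cS1, cS2]
  set a : ℂ := A 0 0 with ha
  set b : ℂ := B 0 0 with hb
  -- conj a = b
  have hconj : (starRingEnd ℂ) a = b := by
    have hAH : Aᴴ = B := by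
      rw [hA, hB]
      simp only [conjTranspose_mul, conjTranspose_conjTranspose,
        Matrix.conjTranspose_nonsing_inv, hS₀H]
      simp only [Matrix.mul_assoc]
    have := congrArg (fun X : Matrix (Fin 1) (Fin 1) ℂ => X 0 0) hAH
    simpa [Matrix.conjTranspose_apply] using this
  -- scalar identity a*b = I*(b-a)
  have hab : a * b = Complex.I * (b - a) := by
    have := congrArg (fun X : Matrix (Fin 1) (Fin 1) ℂ => X 0 0) hAB
    simpa [Matrix.mul_apply, Fin.sum_univ_one, Matrix.smul_apply, Matrix.sub_apply,
      ha, hb, smul_eq_mul] using this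
  -- |1 + I a| = 1
  set z : ℂ := 1 + Complex.I * a with hz
  have hzconj : z * (starRingEnd ℂ) z = 1 := by
    have hcz : (starRingEnd ℂ) z = 1 - Complex.I * b := by
      rw [hz, map_add, _root_.map_one, _root_.map_mul, Complex.conj_I, hconj]; ring
    rw [hcz, hz]
    have hI2 : Complex.I * Complex.I = -1 := Complex.I_mul_I
    linear_combination hab - a * b * hI2
  have hnsq : Complex.normSq z = 1 := by
    have := Complex.mul_conj z
    rw [hzconj] at this
    exact_mod_cast this.symm
  have habsz : ‖z‖ = 1 := by
    rw [Complex.norm_def, hnsq, Real.sqrt_one]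
  -- c² = -I
  have hc2 : c ^ 2 = -Complex.I := by
    have hsq : ((Real.sqrt 2 : ℝ) : ℂ) ^ 2 = 2 := by
      norm_cast
      rw [Real.sq_sqrt]; norm_num
    rw [hc, div_pow, hsq]
    have hsqI : (1 - Complex.I) ^ 2 = -2 * Complex.I := by
      linear_combination Complex.I_sq
    rw [hsqI]
    ring
  rw [hc2, norm_mul, habsz]
  simp
end
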